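/- (Sandqvist's soundness and completeness for IPL) For every finite set Γ of IPL formulas and every IPL formula φ: Γ ⊢ φ in intuitionistic propositional logic if and only if Γ ⊩ φ, i.e. Γ ⊩_B φ holds for every base B. -/

import Mathlib

/-- Formulas of intuitionistic propositional logic over a denumerable
set of atoms (here: `ℕ`). -/
inductive IPLForm : Type where
  | atom : ℕ → IPLForm
  | and : IPLForm → IPLForm → IPLForm
  | or : IPLForm → IPLForm → IPLForm
  | imp : IPLForm → IPLForm → IPLForm
  | bot : IPLForm
deriving DecidableEq

/-- A (second-level) atomic rule `(Q₁ ▷ q₁, …, Qₙ ▷ qₙ) ⇒ q`;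
an axiom `⇒ q` is the case `prems = []`. -/
structure IPLRule : Type where
  prems : List (Finset ℕ × ℕ)
  concl : ℕ

/-- A base is a set of atomic rules. -/
abbrev IPLBase := Set IPLRule

/-- Derivability in a base `B`: `S ⊢_B q`. -/
inductive IPLDer (B : IPLBase) : Finset ℕ → ℕ → Prop where
  | ref {S : Finset ℕ} {q : ℕ} : q ∈ S → IPLDer B S q
  | app {S : Finset ℕ} {r : IPLRule} :
      r ∈ B → (∀ pr ∈ r.prems, IPLDer B (S ∪ pr.1) pr.2) →
      IPLDer B S r.concl

/-- Sandqvist's support relation `⊩_B φ`. -/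
def Supp : IPLForm → IPLBase → Prop
  | .atom p, B => IPLDer B ∅ p
  | .and φ ψ, B => Supp φ B ∧ Supp ψ B
  | .or φ ψ, B => ∀ C : IPLBase, B ⊆ C → ∀ p : ℕ,
      (∀ D : IPLBase, C ⊆ D → Supp φ D → IPLDer D ∅ p) →
      (∀ D : IPLBase, C ⊆ D → Supp ψ D → IPLDer D ∅ p) →
      IPLDer C ∅ p
  | .imp φ ψ, B => ∀ C : IPLBase, B ⊆ C → Supp φ C → Supp ψ C
  | .bot, B => ∀ p : ℕ, IPLDer B ∅ p

/-- Support of a formula relative to a context (finite set of formulas):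
`Γ ⊩_B φ`. -/
def SuppCtx (Γ : Finset IPLForm) (B : IPLBase) (φ : IPLForm) : Prop :=
  ∀ C : IPLBase, B ⊆ C → (∀ ψ ∈ Γ, Supp ψ C) → Supp φ C

/-- The modified support relation `⊩*_B φ`, in which the clause for `∧`
takes the form of the generalized elimination rule. -/
def Supp' : IPLForm → IPLBase → Prop
  | .atom p, B => IPLDer B ∅ p
  | .and φ ψ, B => ∀ C : IPLBase, B ⊆ C → ∀ p : ℕ,
      (∀ D : IPLBase, C ⊆ D → Supp' φ D → Supp' ψ D → IPLDer D ∅ p) →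
      IPLDer C ∅ p
  | .or φ ψ, B => ∀ C : IPLBase, B ⊆ C → ∀ p : ℕ,
      (∀ D : IPLBase, C ⊆ D → Supp' φ D → IPLDer D ∅ p) →
      (∀ D : IPLBase, C ⊆ D → Supp' ψ D → IPLDer D ∅ p) →
      IPLDer C ∅ p
  | .imp φ ψ, B => ∀ C : IPLBase, B ⊆ C → Supp' φ C → Supp' ψ C
  | .bot, B => ∀ p : ℕ, IPLDer B ∅ p

/-- Support relative to a context for the modified semantics: `Γ ⊩*_B φ`. -/
def SuppCtx' (Γ : Finset IPLForm) (B : IPLBase) (φ : IPLForm) : Prop :=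
  ∀ C : IPLBase, B ⊆ C → (∀ ψ ∈ Γ, Supp' ψ C) → Supp' φ C

/-- Gentzen's natural deduction system NJ for IPL, with finite sets as
contexts: `Γ ⊢ φ`. -/
inductive NJ : Finset IPLForm → IPLForm → Prop where
  | ax {Γ : Finset IPLForm} {φ : IPLForm} : φ ∈ Γ → NJ Γ φ
  | andI {Γ φ ψ} : NJ Γ φ → NJ Γ ψ → NJ Γ (.and φ ψ)
  | andE1 {Γ φ ψ} : NJ Γ (.and φ ψ) → NJ Γ φ
  | andE2 {Γ φ ψ} : NJ Γ (.and φ ψ) → NJ Γ ψ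
  | orI1 {Γ φ ψ} : NJ Γ φ → NJ Γ (.or φ ψ)
  | orI2 {Γ φ ψ} : NJ Γ ψ → NJ Γ (.or φ ψ)
  | orE {Γ φ ψ χ} : NJ Γ (.or φ ψ) → NJ (insert φ Γ) χ → NJ (insert ψ Γ) χ → NJ Γ χ
  | impI {Γ φ ψ} : NJ (insert φ Γ) ψ → NJ Γ (.imp φ ψ)
  | impE {Γ φ ψ} : NJ Γ (.imp φ ψ) → NJ Γ φ → NJ Γ ψ
  | botE {Γ φ} : NJ Γ .bot → NJ Γ φ

/-!
Soundness is an induction on NJ derivations. For completeness, following Sandqvist, name each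
formula `ξ` of the subformula closure of `Γ ∪ {φ}` by an atom `fl ξ` (atoms by themselves, the
other formulas by fresh atoms) and let `N` be the base whose rules are the NJ introduction and
elimination rules transcribed onto these names, plus the axioms `⇒ fl γ` for `γ ∈ Γ`. Over any
extension of `N`, supporting `ξ` is the same as deriving `fl ξ`, so `Γ ⊩ φ` gives `⊢_N fl φ`;
reading every rule of `N` back as the NJ rule it transcribes turns this atomic derivation into an
NJ derivation of `φ` from `Γ`.
-/

namespace IPLDer

variable {B C : IPLBase} {S : Finset ℕ} {a q : ℕ}

theorem mono_base (h : B ⊆ C) (d : IPLDer B S q) : IPLDer C S q := by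
  induction d with
  | ref hq => exact .ref hq
  | app hr _ ih => exact .app (h hr) ih

theorem app_empty {r : IPLRule} (h : r ∈ B) (hp : ∀ pr ∈ r.prems, IPLDer B pr.1 pr.2) :
    IPLDer B ∅ r.concl :=
  .app h fun pr hpr => by simpa using hp pr hpr

theorem insert_ax_self : IPLDer (insert ⟨[], a⟩ B) S a :=
  .app (r := ⟨[], a⟩) (Set.mem_insert _ _) (by simp)

theorem of_insert_ax (d : IPLDer (insert ⟨[], a⟩ B) S q) : IPLDer B (insert a S) q := by
  induction d with
  | ref hq => exact .ref (Finset.mem_insert_of_mem hq)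
  | app hr _ ih =>
    rcases hr with rfl | hr
    · exact .ref (Finset.mem_insert_self _ _)
    · exact .app hr fun pr hpr => by simpa only [Finset.insert_union] using ih pr hpr

end IPLDer

namespace Supp

theorem mono : ∀ (φ : IPLForm) {B C : IPLBase}, B ⊆ C → Supp φ B → Supp φ C
  | .atom _, _, _, h, hs => hs.mono_base h
  | .and φ ψ, _, _, h, hs => ⟨mono φ h hs.1, mono ψ h hs.2⟩
  | .or _ _, _, _, h, hs => fun D hD => hs D (h.trans hD)
  | .imp _ _, _, _, h, hs => fun D hD => hs D (h.trans hD)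
  | .bot, _, _, h, hs => fun p => (hs p).mono_base h

theorem of_bot : ∀ (φ : IPLForm) {B : IPLBase}, Supp .bot B → Supp φ B
  | .atom p, _, h => h p
  | .and φ ψ, _, h => ⟨of_bot φ h, of_bot ψ h⟩
  | .or _ _, _, h => fun _ hC p _ _ => (h p).mono_base hC
  | .imp _ ψ, _, h => fun _ hC _ => of_bot ψ fun p => (h p).mono_base hC
  | .bot, _, h => h

/-- The support clause for `∨` only eliminates into atoms; this extends it to every `χ`. -/
theorem or_elim : ∀ (χ : IPLForm) {φ ψ : IPLForm} {B : IPLBase}, Supp (.or φ ψ) B →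
    (∀ C, B ⊆ C → Supp φ C → Supp χ C) → (∀ C, B ⊆ C → Supp ψ C → Supp χ C) → Supp χ B
  | .atom p, _, _, B, hor, h₁, h₂ => hor B le_rfl p h₁ h₂
  | .and χ₁ χ₂, _, _, _, hor, h₁, h₂ =>
      ⟨or_elim χ₁ hor (fun C hC h => (h₁ C hC h).1) (fun C hC h => (h₂ C hC h).1),
       or_elim χ₂ hor (fun C hC h => (h₁ C hC h).2) (fun C hC h => (h₂ C hC h).2)⟩
  | .imp _ χ₂, _, _, _, hor, h₁, h₂ => fun _ hC hχ₁ =>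
      or_elim χ₂ (mono _ hC hor)
        (fun D hD h => h₁ D (hC.trans hD) h D le_rfl (mono _ hD hχ₁))
        (fun D hD h => h₂ D (hC.trans hD) h D le_rfl (mono _ hD hχ₁))
  | .or _ _, _, _, _, hor, h₁, h₂ => fun C hC p k₁ k₂ =>
      hor C hC p
        (fun D hD h => h₁ D (hC.trans hD) h D le_rfl p
          (fun E hE => k₁ E (hD.trans hE)) (fun E hE => k₂ E (hD.trans hE)))
        (fun D hD h => h₂ D (hC.trans hD) h D le_rfl p
          (fun E hE => k₁ E (hD.trans hE)) (fun E hE => k₂ E (hD.trans hE)))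
  | .bot, _, _, B, hor, h₁, h₂ => fun p =>
      hor B le_rfl p (fun D hD h => h₁ D hD h p) (fun D hD h => h₂ D hD h p)

theorem forall_insert {Γ : Finset IPLForm} {φ : IPLForm} {C D : IPLBase} (hCD : C ⊆ D)
    (hΓ : ∀ ψ ∈ Γ, Supp ψ C) (hφ : Supp φ D) : ∀ ψ ∈ insert φ Γ, Supp ψ D := by
  simp only [Finset.mem_insert, forall_eq_or_imp]
  exact ⟨hφ, fun ψ hψ => (hΓ ψ hψ).mono _ hCD⟩

end Supp

theorem NJ.sound {Γ : Finset IPLForm} {φ : IPLForm} (h : NJ Γ φ) (B : IPLBase) :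
    SuppCtx Γ B φ := by
  induction h generalizing B with
  | ax hφ => exact fun C _ hΓ => hΓ _ hφ
  | andI _ _ ih₁ ih₂ => exact fun C hC hΓ => ⟨ih₁ B C hC hΓ, ih₂ B C hC hΓ⟩
  | andE1 _ ih => exact fun C hC hΓ => (ih B C hC hΓ).1
  | andE2 _ ih => exact fun C hC hΓ => (ih B C hC hΓ).2
  | orI1 _ ih => exact fun C hC hΓ D hD _ k _ => k D le_rfl ((ih B C hC hΓ).mono _ hD)
  | orI2 _ ih => exact fun C hC hΓ D hD _ _ k => k D le_rfl ((ih B C hC hΓ).mono _ hD)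
  | orE _ _ _ ih ih₁ ih₂ =>
    exact fun C hC hΓ => Supp.or_elim _ (ih B C hC hΓ)
      (fun D hD h => ih₁ B D (hC.trans hD) (Supp.forall_insert hD hΓ h))
      (fun D hD h => ih₂ B D (hC.trans hD) (Supp.forall_insert hD hΓ h))
  | impI _ ih => exact fun C hC hΓ D hD h => ih B D (hC.trans hD) (Supp.forall_insert hD hΓ h)
  | impE _ _ ih₁ ih₂ => exact fun C hC hΓ => ih₁ B C hC hΓ C le_rfl (ih₂ B C hC hΓ)
  | botE _ ih => exact fun C hC hΓ => Supp.of_bot _ (ih B C hC hΓ)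

namespace IPLForm

def subformulas : IPLForm → Finset IPLForm
  | atom p => {atom p}
  | and a b => insert (and a b) (a.subformulas ∪ b.subformulas)
  | or a b => insert (or a b) (a.subformulas ∪ b.subformulas)
  | imp a b => insert (imp a b) (a.subformulas ∪ b.subformulas)
  | bot => {bot}

@[simp]
theorem mem_subformulas_self (φ : IPLForm) : φ ∈ φ.subformulas := by
  cases φ <;> simp [subformulas]

theorem subformulas_subset_of_mem {φ ψ : IPLForm} (h : ψ ∈ φ.subformulas) :
    ψ.subformulas ⊆ φ.subformulas := by
  induction φ with
  | atom | bot => simp_all [subformulas]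
  | and a b iha ihb | or a b iha ihb | imp a b iha ihb =>
    simp only [subformulas, Finset.mem_insert, Finset.mem_union] at h
    rcases h with rfl | h | h
    · rfl
    · exact (iha h).trans (Finset.subset_union_left.trans (Finset.subset_insert _ _))
    · exact (ihb h).trans (Finset.subset_union_right.trans (Finset.subset_insert _ _))

end IPLForm

structure SubformulaClosed (Sf : Finset IPLForm) : Prop where
  and {a b : IPLForm} : .and a b ∈ Sf → a ∈ Sf ∧ b ∈ Sf
  or {a b : IPLForm} : .or a b ∈ Sf → a ∈ Sf ∧ b ∈ Sf
  imp {a b : IPLForm} : .imp a b ∈ Sf → a ∈ Sf ∧ b ∈ Sf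

theorem exists_superset_subformulaClosed (s : Finset IPLForm) :
    ∃ Sf : Finset IPLForm, s ⊆ Sf ∧ SubformulaClosed Sf := by
  set Sf := s.biUnion IPLForm.subformulas
  have hcl : ∀ ξ ∈ Sf, ξ.subformulas ⊆ Sf := fun ξ hξ => by
    obtain ⟨φ, hφ, hξφ⟩ := Finset.mem_biUnion.1 hξ
    exact (IPLForm.subformulas_subset_of_mem hξφ).trans (Finset.subset_biUnion_of_mem _ hφ)
  refine ⟨Sf, fun φ hφ => Finset.mem_biUnion.2 ⟨φ, hφ, by simp⟩,
    ⟨fun h => ?_, fun h => ?_, fun h => ?_⟩⟩ <;>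
  exact ⟨hcl _ h (by simp [IPLForm.subformulas]), hcl _ h (by simp [IPLForm.subformulas])⟩

theorem exists_atom_naming (Sf : Finset IPLForm) :
    ∃ (fl : IPLForm → ℕ) (un : ℕ → IPLForm),
      (∀ p, fl (.atom p) = p) ∧ Set.LeftInvOn un fl Sf := by
  obtain ⟨M, hM⟩ : ∃ M, ∀ p, IPLForm.atom p ∈ Sf → p ≤ M :=
    (Sf.finite_toSet.preimage fun _ _ _ _ h => IPLForm.atom.inj h).bddAbove
  let fl : IPLForm → ℕ
    | .atom p => p
    | ξ => M + 1 + Sf.toList.idxOf ξ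
  have : Nonempty IPLForm := ⟨.bot⟩
  refine ⟨fl, Function.invFunOn fl Sf, fun _ => rfl, Set.InjOn.leftInvOn_invFunOn ?_⟩
  intro ξ hξ ζ hζ h
  have hidx := List.idxOf_inj (y := ζ) (Finset.mem_toList.2 hξ)
  -- the atoms of `Sf` are named below `M + 1`, all other formulas at or above it
  cases ξ <;> cases ζ <;> simp only [fl, IPLForm.atom.injEq, add_right_inj, hidx] at h ⊢ <;>
    first | exact h | (have := hM _ hξ; omega) | (have := hM _ hζ; omega)

/-- Sandqvist's simulation base: the introduction and elimination rules of NJ for the formulas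
of `Sf`, read on the atoms naming them, together with the axioms `⇒ fl γ` for `γ ∈ Γ`. -/
inductive SimRule (Sf Γ : Finset IPLForm) (fl : IPLForm → ℕ) : IPLRule → Prop
  | hyp {γ} : γ ∈ Γ → SimRule Sf Γ fl ⟨[], fl γ⟩
  | andI {a b} : .and a b ∈ Sf → SimRule Sf Γ fl ⟨[(∅, fl a), (∅, fl b)], fl (.and a b)⟩
  | andE1 {a b} : .and a b ∈ Sf → SimRule Sf Γ fl ⟨[(∅, fl (.and a b))], fl a⟩
  | andE2 {a b} : .and a b ∈ Sf → SimRule Sf Γ fl ⟨[(∅, fl (.and a b))], fl b⟩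
  | orI1 {a b} : .or a b ∈ Sf → SimRule Sf Γ fl ⟨[(∅, fl a)], fl (.or a b)⟩
  | orI2 {a b} : .or a b ∈ Sf → SimRule Sf Γ fl ⟨[(∅, fl b)], fl (.or a b)⟩
  | orE {a b p} : .or a b ∈ Sf →
      SimRule Sf Γ fl ⟨[(∅, fl (.or a b)), ({fl a}, p), ({fl b}, p)], p⟩
  | impI {a b} : .imp a b ∈ Sf → SimRule Sf Γ fl ⟨[({fl a}, fl b)], fl (.imp a b)⟩
  | impE {a b} : .imp a b ∈ Sf → SimRule Sf Γ fl ⟨[(∅, fl (.imp a b)), (∅, fl a)], fl b⟩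
  | botE {p} : .bot ∈ Sf → SimRule Sf Γ fl ⟨[(∅, fl .bot)], p⟩

def simBase (Sf Γ : Finset IPLForm) (fl : IPLForm → ℕ) : IPLBase := {r | SimRule Sf Γ fl r}

def Simulates (N : IPLBase) (fl : IPLForm → ℕ) (ξ : IPLForm) : Prop :=
  ∀ C, N ⊆ C → (Supp ξ C ↔ IPLDer C ∅ (fl ξ))

namespace Simulates

variable {Sf Γ : Finset IPLForm} {fl : IPLForm → ℕ} {a b : IPLForm} {C : IPLBase}

local notation "N" => simBase Sf Γ fl

/-- Hypothetical support of `a` becomes derivability from the hypothesis `fl a`: pass to the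
base with the extra axiom `⇒ fl a`, where `a` is supported, and discharge that axiom. -/
theorem der_singleton {N' : IPLBase} (ha : Simulates N' fl a) (hC : N' ⊆ C) {p : ℕ}
    (k : ∀ D, C ⊆ D → Supp a D → IPLDer D ∅ p) : IPLDer C {fl a} p := by
  have hCD : C ⊆ insert ⟨[], fl a⟩ C := Set.subset_insert _ _
  have hsa := (ha _ (hC.trans hCD)).2 IPLDer.insert_ax_self
  simpa using (k _ hCD hsa).of_insert_ax

theorem and (hmem : .and a b ∈ Sf) (ha : Simulates N fl a) (hb : Simulates N fl b) :
    Simulates N fl (.and a b) := by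
  intro C hC
  constructor
  · rintro ⟨h₁, h₂⟩
    exact .app_empty (hC (.andI hmem)) (by simpa using ⟨(ha C hC).1 h₁, (hb C hC).1 h₂⟩)
  · intro h
    exact ⟨(ha C hC).2 (.app_empty (hC (.andE1 hmem)) (by simpa using h)),
      (hb C hC).2 (.app_empty (hC (.andE2 hmem)) (by simpa using h))⟩

theorem or (hmem : .or a b ∈ Sf) (ha : Simulates N fl a) (hb : Simulates N fl b) :
    Simulates N fl (.or a b) := by
  intro C hC
  constructor
  · intro hs
    refine hs C le_rfl (fl (.or a b)) (fun D hD h => ?_) (fun D hD h => ?_)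
    · exact .app_empty (hD (hC (.orI1 hmem))) (by simpa using (ha D (hC.trans hD)).1 h)
    · exact .app_empty (hD (hC (.orI2 hmem))) (by simpa using (hb D (hC.trans hD)).1 h)
  · intro h D hD p k₁ k₂
    have hND := hC.trans hD
    exact .app_empty (hD (hC (.orE hmem)))
      (by simpa using ⟨h.mono_base hD, ha.der_singleton hND k₁, hb.der_singleton hND k₂⟩)

theorem imp (hmem : .imp a b ∈ Sf) (ha : Simulates N fl a) (hb : Simulates N fl b) :
    Simulates N fl (.imp a b) := by
  intro C hC
  constructor
  · intro hs
    have hb' : IPLDer C {fl a} (fl b) :=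
      ha.der_singleton hC fun D hD h => (hb D (hC.trans hD)).1 (hs D hD h)
    exact .app_empty (hC (.impI hmem)) (by simpa using hb')
  · intro h D hD hsa
    refine (hb D (hC.trans hD)).2 (.app_empty (hD (hC (.impE hmem))) ?_)
    simpa using ⟨h.mono_base hD, (ha D (hC.trans hD)).1 hsa⟩

theorem bot (hmem : .bot ∈ Sf) : Simulates N fl .bot := by
  intro C hC
  exact ⟨fun hs => hs (fl .bot), fun h p => .app_empty (hC (.botE hmem)) (by simpa using h)⟩

theorem of_mem (hatom : ∀ p, fl (.atom p) = p) (hcl : SubformulaClosed Sf) :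
    ∀ ξ ∈ Sf, Simulates N fl ξ := by
  intro ξ hξ
  induction ξ with
  | atom p => exact fun C _ => by rw [hatom]; rfl
  | and a b iha ihb => exact .and hξ (iha (hcl.and hξ).1) (ihb (hcl.and hξ).2)
  | or a b iha ihb => exact .or hξ (iha (hcl.or hξ).1) (ihb (hcl.or hξ).2)
  | imp a b iha ihb => exact .imp hξ (iha (hcl.imp hξ).1) (ihb (hcl.imp hξ).2)
  | bot => exact .bot hξ

end Simulates

def AdmissibleNJ (un : ℕ → IPLForm) (Γ : Finset IPLForm) (r : IPLRule) : Prop :=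
  ∀ Δ, Γ ⊆ Δ → (∀ pr ∈ r.prems, NJ (pr.1.image un ∪ Δ) (un pr.2)) → NJ Δ (un r.concl)

theorem NJ.of_iplDer {B : IPLBase} {un : ℕ → IPLForm} {Γ : Finset IPLForm}
    (hB : ∀ r ∈ B, AdmissibleNJ un Γ r) {S : Finset ℕ} {q : ℕ} (d : IPLDer B S q) :
    NJ (S.image un ∪ Γ) (un q) := by
  induction d with
  | ref hq => exact .ax (Finset.mem_union_left _ (Finset.mem_image_of_mem _ hq))
  | @app S r hr _ ih =>
    refine hB r hr _ Finset.subset_union_right fun pr hpr => ?_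
    simpa only [Finset.image_union, Finset.union_comm (S.image un), Finset.union_assoc]
      using ih pr hpr

theorem SimRule.admissibleNJ {Sf Γ : Finset IPLForm} {fl : IPLForm → ℕ} {un : ℕ → IPLForm}
    (hun : Set.LeftInvOn un fl Sf) (hΓ : Γ ⊆ Sf) (hcl : SubformulaClosed Sf)
    {r : IPLRule} (hr : SimRule Sf Γ fl r) : AdmissibleNJ un Γ r := by
  intro Δ hΔ h
  cases hr <;>
    simp only [List.mem_cons, List.not_mem_nil, or_false, forall_eq_or_imp, forall_eq,
      Finset.image_empty, Finset.empty_union, Finset.image_singleton, Finset.singleton_union] at h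
  case hyp γ hγ => exact .ax (by simpa only [hun (hΓ hγ)] using hΔ hγ)
  case andI a b hm =>
    simp only [hun hm, hun (hcl.and hm).1, hun (hcl.and hm).2] at h ⊢; exact .andI h.1 h.2
  case andE1 a b hm => simp only [hun hm, hun (hcl.and hm).1] at h ⊢; exact .andE1 h
  case andE2 a b hm => simp only [hun hm, hun (hcl.and hm).2] at h ⊢; exact .andE2 h
  case orI1 a b hm => simp only [hun hm, hun (hcl.or hm).1] at h ⊢; exact .orI1 h
  case orI2 a b hm => simp only [hun hm, hun (hcl.or hm).2] at h ⊢; exact .orI2 h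
  case orE a b p hm =>
    simp only [hun hm, hun (hcl.or hm).1, hun (hcl.or hm).2] at h; exact .orE h.1 h.2.1 h.2.2
  case impI a b hm =>
    simp only [hun hm, hun (hcl.imp hm).1, hun (hcl.imp hm).2] at h ⊢; exact .impI h
  case impE a b hm =>
    simp only [hun hm, hun (hcl.imp hm).1, hun (hcl.imp hm).2] at h ⊢; exact .impE h.1 h.2
  case botE p hm => simp only [hun hm] at h; exact .botE h

/-- (Sandqvist's soundness and completeness for IPL) For every finite set
`Γ` of IPL formulas and every IPL formula `φ`: `Γ ⊢ φ` in IPL iff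
`Γ ⊩_B φ` holds for every base `B`. -/
theorem ipl_soundness_completeness (Γ : Finset IPLForm) (φ : IPLForm) :
    NJ Γ φ ↔ ∀ B : IPLBase, SuppCtx Γ B φ := by
  refine ⟨NJ.sound, fun H => ?_⟩
  obtain ⟨Sf, hsub, hcl⟩ := exists_superset_subformulaClosed (insert φ Γ)
  have hφ : φ ∈ Sf := hsub (Finset.mem_insert_self _ _)
  have hΓ : Γ ⊆ Sf := (Finset.subset_insert _ _).trans hsub
  obtain ⟨fl, un, hatom, hun⟩ := exists_atom_naming Sf
  let N := simBase Sf Γ fl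
  have hsim : ∀ ξ ∈ Sf, Simulates N fl ξ := Simulates.of_mem hatom hcl
  have hΓN : ∀ γ ∈ Γ, Supp γ N := fun γ hγ =>
    (hsim γ (hΓ hγ) N le_rfl).2 (.app_empty (SimRule.hyp hγ) (by simp))
  have hder : IPLDer N ∅ (fl φ) := (hsim φ hφ N le_rfl).1 (H N N le_rfl hΓN)
  simpa [hun hφ] using NJ.of_iplDer (fun r hr => SimRule.admissibleNJ hun hΓ hcl hr) hder
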